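/- Let q₀, q₁ ∈ [0,∞) and η ∈ (0,1). There exists a constant C > 0 such that for every t ∈ [1,∞), (t − 1)^{q₁} ≤ C ∫_η^t (t − r)^{q₀} / r^{1 + q₀ − q₁} dr. -/
import Mathlib

open MeasureTheory intervalIntegral Real

theorem stmt3 (q₀ q₁ : ℝ) (hq₀ : 0 ≤ q₀) (hq₁ : 0 ≤ q₁) (η : ℝ) (hη : η ∈ Set.Ioo (0:ℝ) 1) :
    ∃ C : ℝ, 0 < C ∧ ∀ t : ℝ, 1 ≤ t →
      (t - 1) ^ q₁ ≤ C * ∫ r in η..t, (t - r) ^ q₀ / r ^ (1 + q₀ - q₁) := by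
  obtain ⟨hη0, hη1⟩ := hη
  set e := 1 + q₀ - q₁ with he
  set K := max 1 ((2:ℝ) ^ (-e)) with hKdef
  have hK1 : (1:ℝ) ≤ K := le_max_left _ _
  have hK0 : (0:ℝ) < K := lt_of_lt_of_le one_pos hK1
  have h1η : (0:ℝ) < 1 - η := by linarith
  refine ⟨(4/(1-η)) ^ (1+q₀) * K, by positivity, fun t ht => ?_⟩
  have ht0 : (0:ℝ) < t := by linarith
  have hηt : η < t := by linarith
  set f : ℝ → ℝ := fun r => (t - r) ^ q₀ / r ^ e with hf
  have hcont : ContinuousOn f (Set.Icc η t) := by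
    intro r hr
    have hr0 : 0 < r := lt_of_lt_of_le hη0 hr.1
    exact (((continuousAt_const.sub continuousAt_id).rpow_const (Or.inr hq₀)).div
      (continuousAt_id.rpow_const (Or.inl hr0.ne')) (Real.rpow_pos_of_pos hr0 e).ne').continuousWithinAt
  have hint : IntervalIntegrable f volume η t := by
    apply ContinuousOn.intervalIntegrable
    rwa [Set.uIcc_of_le hηt.le]
  set m := (η + t)/2 with hm_def
  set M := (η + 3*t)/4 with hM_def
  have hm : η ≤ m := by rw [hm_def]; linarith
  have hmM : m ≤ M := by rw [hm_def, hM_def]; linarith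
  have hMt : M ≤ t := by rw [hM_def]; linarith
  have hnonneg : 0 ≤ᵐ[volume.restrict (Set.Ioc η t)] f := by
    filter_upwards [ae_restrict_mem measurableSet_Ioc] with r hr
    have hr0 : 0 < r := lt_trans hη0 hr.1
    have hrt : (0:ℝ) ≤ t - r := by linarith [hr.2]
    have := Real.rpow_pos_of_pos hr0 e
    positivity
  have hsub : ∫ r in m..M, f r ≤ ∫ r in η..t, f r :=
    intervalIntegral.integral_mono_interval hm hmM hMt hnonneg hint
  set c := ((t - η)/4) ^ q₀ / (K * t ^ e) with hc
  have hXpos : (0:ℝ) < (t - η)/4 := by linarith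
  have hte : (0:ℝ) < t ^ e := Real.rpow_pos_of_pos ht0 e
  have hbound : ∀ r ∈ Set.Icc m M, c ≤ f r := by
    intro r hr
    have hr0 : 0 < r := lt_of_lt_of_le (lt_of_lt_of_le hη0 hm) hr.1
    have hrt : r ≤ t := le_trans hr.2 hMt
    have h1 : (t - η)/4 ≤ t - r := by
      have := hr.2; rw [hM_def] at this; linarith
    have h2 : r ^ e ≤ K * t ^ e := by
      rcases le_or_gt 0 e with he0 | he0
      · calc r ^ e ≤ t ^ e := Real.rpow_le_rpow hr0.le hrt he0
          _ ≤ K * t ^ e := le_mul_of_one_le_left hte.le hK1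
      · have hr2 : t/2 ≤ r := by
          have := hr.1; rw [hm_def] at this; linarith
        have hK2 : (2:ℝ) ^ (-e) ≤ K := le_max_right _ _
        calc r ^ e ≤ (t/2) ^ e := Real.rpow_le_rpow_of_nonpos (by linarith) hr2 he0.le
          _ = t ^ e * 2 ^ (-e) := by
              rw [Real.div_rpow ht0.le (by norm_num), Real.rpow_neg (by norm_num)]
              ring
          _ ≤ t ^ e * K := by nlinarith
          _ = K * t ^ e := mul_comm _ _
    have hnum : ((t-η)/4) ^ q₀ ≤ (t-r) ^ q₀ := Real.rpow_le_rpow hXpos.le h1 hq₀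
    have hre : 0 < r ^ e := Real.rpow_pos_of_pos hr0 e
    exact div_le_div₀ (Real.rpow_nonneg (by linarith) q₀) hnum hre h2
  have hintM : IntervalIntegrable f volume m M := by
    apply ContinuousOn.intervalIntegrable
    apply hcont.mono
    rw [Set.uIcc_of_le hmM]
    exact Set.Icc_subset_Icc hm hMt
  have hconst : ((t - η)/4) * c ≤ ∫ r in m..M, f r := by
    have h := intervalIntegral.integral_mono_on hmM intervalIntegrable_const hintM hbound
    rw [intervalIntegral.integral_const] at h
    have hMm : M - m = (t - η)/4 := by rw [hm_def, hM_def]; ring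
    rw [hMm, smul_eq_mul] at h
    exact h
  have hI : ((t-η)/4) * c ≤ ∫ r in η..t, f r := le_trans hconst hsub
  have hte' : (0:ℝ) < t ^ (-e) := Real.rpow_pos_of_pos ht0 (-e)
  have h4 : (4/(1-η))^(1+q₀) * K * (((t-η)/4) * c)
      = ((t-η)/(1-η))^(1+q₀) * t^(-e) := by
    have hX1 : ((t-η)/4 : ℝ) * ((t-η)/4)^q₀ = ((t-η)/4)^(1+q₀) := by
      rw [Real.rpow_add hXpos, Real.rpow_one]
    have hmulpow : (4/(1-η) : ℝ)^(1+q₀) * ((t-η)/4)^(1+q₀) = ((t-η)/(1-η))^(1+q₀) := by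
      rw [← Real.mul_rpow (by positivity) hXpos.le]
      congr 1
      field_simp
    rw [hc]
    rw [show ((t-η)/4 : ℝ) * (((t-η)/4)^q₀ / (K * t^e)) = ((t-η)/4)^(1+q₀) / (K * t^e) by
      rw [← hX1]; ring]
    rw [Real.rpow_neg ht0.le, ← hmulpow]
    field_simp
  have key : (t - 1) ^ q₁ ≤ (4/(1-η))^(1+q₀) * K * (((t-η)/4) * c) := by
    have h1 : (t-1)^q₁ ≤ t^q₁ := Real.rpow_le_rpow (by linarith) (by linarith) hq₁
    have h2 : t ^ q₁ = t ^ (1+q₀) * t ^ (-e) := by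
      rw [← Real.rpow_add ht0]; congr 1; rw [he]; ring
    have h3 : t ^ (1+q₀) ≤ ((t-η)/(1-η)) ^ (1+q₀) := by
      apply Real.rpow_le_rpow ht0.le ?_ (by linarith)
      rw [le_div_iff₀ h1η]
      nlinarith
    calc (t-1)^q₁ ≤ t^q₁ := h1
      _ = t^(1+q₀) * t^(-e) := h2
      _ ≤ ((t-η)/(1-η))^(1+q₀) * t^(-e) := mul_le_mul_of_nonneg_right h3 hte'.le
      _ = (4/(1-η))^(1+q₀) * K * (((t-η)/4) * c) := h4.symm
  calc (t - 1) ^ q₁ ≤ (4/(1-η))^(1+q₀) * K * (((t-η)/4) * c) := key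
    _ ≤ (4/(1-η))^(1+q₀) * K * ∫ r in η..t, f r :=
        mul_le_mul_of_nonneg_left hI (by positivity)
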